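/- Let h be a norm on ℝ^p and suppose β̂ is a solution of min_{β∈ℝ^p} (‖Xβ − y‖² + 2h(β)). Then for every realization of ε, sup_{u∈ℝ^p : ‖Xu‖ ≤ 1} (εᵀXu − h(u)) ≤ ‖X(β̂ − β*)‖. -/
import Mathlib


/-- Euclidean norm of a vector in `ℝ^k`. -/
noncomputable def l2norm {k : ℕ} (v : Fin k → ℝ) : ℝ := Real.sqrt (∑ i, (v i) ^ 2)

/-- Euclidean inner product on `ℝ^k`. -/
noncomputable def dotp {k : ℕ} (u v : Fin k → ℝ) : ℝ := ∑ i, u i * v i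

lemma l2norm_nonneg' {k : ℕ} (v : Fin k → ℝ) : 0 ≤ l2norm v := Real.sqrt_nonneg _

lemma l2norm_sq' {k : ℕ} (v : Fin k → ℝ) : l2norm v ^ 2 = ∑ i, (v i) ^ 2 :=
  Real.sq_sqrt (Finset.sum_nonneg fun _ _ => sq_nonneg _)

lemma sq_expand' {k : ℕ} (a w : Fin k → ℝ) (t : ℝ) :
    l2norm (a + t • w) ^ 2 = l2norm a ^ 2 + 2 * t * dotp a w + t ^ 2 * l2norm w ^ 2 := by
  simp only [l2norm_sq', dotp, Pi.add_apply, Pi.smul_apply, smul_eq_mul]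
  rw [Finset.mul_sum, Finset.mul_sum, ← Finset.sum_add_distrib, ← Finset.sum_add_distrib]
  congr 1; ext i; ring

lemma dotp_sub_left' {k : ℕ} (a b w : Fin k → ℝ) :
    dotp (a - b) w = dotp a w - dotp b w := by
  simp only [dotp, Pi.sub_apply, sub_mul, Finset.sum_sub_distrib]

lemma dotp_le' {k : ℕ} (a w : Fin k → ℝ) : dotp a w ≤ l2norm a * l2norm w := by
  have h := Finset.sum_mul_sq_le_sq_mul_sq (Finset.univ) a w
  have h2 : dotp a w ≤ |dotp a w| := le_abs_self _
  have h3 : |dotp a w| = Real.sqrt ((dotp a w) ^ 2) := (Real.sqrt_sq_eq_abs _).symm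
  calc dotp a w ≤ Real.sqrt ((dotp a w) ^ 2) := h3 ▸ h2
    _ ≤ Real.sqrt ((∑ i, a i ^ 2) * ∑ i, w i ^ 2) := Real.sqrt_le_sqrt h
    _ = l2norm a * l2norm w := by
        rw [Real.sqrt_mul (Finset.sum_nonneg fun _ _ => sq_nonneg _)]; rfl

/-- if the penalty `h` is a norm on `ℝ^p` and `β̂` solves
`min ‖Xβ - y‖² + 2h(β)` with `y = Xβ* + ε`, then
`sup_{u : ‖Xu‖ ≤ 1} (εᵀXu - h(u)) ≤ ‖X(β̂-β*)‖`. -/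
theorem norm_penalty_sup_lower_bound {n p : ℕ} (X : Matrix (Fin n) (Fin p) ℝ)
    (bs : Fin p → ℝ) (ε : Fin n → ℝ) (y : Fin n → ℝ) (hy : y = X.mulVec bs + ε)
    (h : (Fin p → ℝ) → ℝ)
    (hadd : ∀ u v : Fin p → ℝ, h (u + v) ≤ h u + h v)
    (hsmul : ∀ (a : ℝ) (u : Fin p → ℝ), h (a • u) = |a| * h u)
    (hdefinite : ∀ u : Fin p → ℝ, h u = 0 → u = 0)
    (bhat : Fin p → ℝ)
    (hmin : ∀ b : Fin p → ℝ,
      l2norm (X.mulVec bhat - y) ^ 2 + 2 * h bhat ≤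
        l2norm (X.mulVec b - y) ^ 2 + 2 * h b) :
    ∀ u : Fin p → ℝ, l2norm (X.mulVec u) ≤ 1 →
      dotp ε (X.mulVec u) - h u ≤ l2norm (X.mulVec (bhat - bs)) := by
  intro u hu
  set w := X.mulVec u with hw
  set Δ := X.mulVec (bhat - bs) with hΔ
  set a := X.mulVec bhat - y with ha
  have haΔ : a = Δ - ε := by
    rw [ha, hΔ, hy, Matrix.mulVec_sub]
    funext i; simp [Pi.sub_apply]; ring
  -- key inequality for each t > 0
  have key : ∀ t : ℝ, 0 < t →
      dotp ε w - h u ≤ dotp Δ w + t / 2 * l2norm w ^ 2 := by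
    intro t ht
    have hb : X.mulVec (bhat + t • u) - y = a + t • w := by
      rw [Matrix.mulVec_add, Matrix.mulVec_smul, ha, hw]
      funext i; simp [Pi.add_apply, Pi.sub_apply]; ring
    have h1 := hmin (bhat + t • u)
    rw [hb, sq_expand'] at h1
    have h2 : h (bhat + t • u) ≤ h bhat + t * h u := by
      have := hadd bhat (t • u)
      rw [hsmul t u, abs_of_pos ht] at this
      exact this
    have h3 : 0 ≤ 2 * t * dotp a w + t ^ 2 * l2norm w ^ 2 + 2 * t * h u := by
      nlinarith
    have h4 : dotp a w = dotp Δ w - dotp ε w := by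
      rw [haΔ, dotp_sub_left']
    rw [h4] at h3
    nlinarith
  have key2 : dotp ε w - h u ≤ dotp Δ w := by
    apply le_of_forall_pos_le_add
    intro δ hδ
    have hden : (0:ℝ) < l2norm w ^ 2 + 1 := by positivity
    have ht : 0 < 2 * δ / (l2norm w ^ 2 + 1) := by positivity
    have := key _ ht
    have hb : 2 * δ / (l2norm w ^ 2 + 1) / 2 * l2norm w ^ 2 ≤ δ := by
      rw [div_div, div_mul_eq_mul_div, div_le_iff₀ (by positivity)]
      nlinarith [sq_nonneg (l2norm w)]
    linarith
  calc dotp ε w - h u ≤ dotp Δ w := key2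
    _ ≤ l2norm Δ * l2norm w := dotp_le' Δ w
    _ ≤ l2norm Δ * 1 := by
        exact mul_le_mul_of_nonneg_left hu (l2norm_nonneg' Δ)
    _ = l2norm Δ := mul_one _
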